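/- Let G be a connected finite simple graph. If the matching polynomial μ(G,x) has exactly 2 distinct real roots, then G is isomorphic to the complete graph K₂. -/

import Mathlib

/-!
By the Heilmann–Lieb theorem all roots of `μ(G, x)` are real, so `μ(G, x)` splits over `ℝ`.
Its roots are symmetric about `0` and sum to `0` (the coefficient of `x ^ (n - 1)` vanishes), so
two distinct roots force `μ(G, x) = (x ^ 2 - c) ^ m` with `c > 0` and `n = 2 * m`; comparing
coefficients, `m(G, k) = (m choose k) * c ^ k`. Deleting one edge from a perfect matching is
injective on pairs (perfect matching, edge of it), so `m * m(G, m) ≤ m(G, m - 1)`, that is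
`m * c ^ m ≤ m * c ^ (m - 1)`, whence `c ≤ 1`. Then `G` has `m(G, 1) = m * c ≤ m` edges, while a
connected graph on `2 * m` vertices has at least `2 * m - 1`; so `m = 1` and `G` is `K₂`.
-/

open Polynomial

/-- The graph obtained from `G` by deleting the vertex `u` and all incident edges. -/
def SimpleGraph.deleteVertex {V : Type*} (G : SimpleGraph V) (u : V) :
    SimpleGraph {v : V // v ≠ u} where
  Adj a b := G.Adj a b
  symm := ⟨fun _ _ h => G.symm.symm _ _ h⟩
  loopless := ⟨fun a h => G.loopless.irrefl a h⟩

/-- `s` is a matching in `G`: a set of edges of `G` that are pairwise non-incident. -/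
def SimpleGraph.IsMatchingFinset {V : Type*} (G : SimpleGraph V) (s : Finset (Sym2 V)) : Prop :=
  ↑s ⊆ G.edgeSet ∧ (s : Set (Sym2 V)).Pairwise fun e f => ∀ v ∈ e, v ∉ f

/-- `m(G,k)`: the number of `k`-matchings in `G`. -/
noncomputable def SimpleGraph.numMatchings {V : Type*} (G : SimpleGraph V) (k : ℕ) : ℕ :=
  {s : Finset (Sym2 V) | s.card = k ∧ G.IsMatchingFinset s}.ncard

/-- The matching polynomial `μ(G,x) = ∑_k (-1)^k m(G,k) x^(n-2k)`. -/
noncomputable def SimpleGraph.matchingPolynomial {V : Type*} [Fintype V] (G : SimpleGraph V) :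
    Polynomial ℝ :=
  ∑ k ∈ Finset.range (Fintype.card V + 1),
    C ((-1 : ℝ) ^ k * (G.numMatchings k : ℝ)) * X ^ (Fintype.card V - 2 * k)

namespace Polynomial

lemma coeff_X_sq_sub_C_pow {R : Type*} [CommRing R] (c : R) {m k : ℕ} (hk : k ≤ m) :
    ((X ^ 2 - C c) ^ m).coeff (2 * (m - k)) = (-c) ^ k * m.choose k := by
  have : (X ^ 2 - C c) ^ m = expand R 2 ((X + C (-c)) ^ m) := by
    simp [sub_eq_add_neg]
  rw [this, coeff_expand two_pos, if_pos (dvd_mul_right 2 _), Nat.mul_div_cancel_left _ two_pos,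
    coeff_X_add_C_pow, Nat.sub_sub_self hk, Nat.choose_symm hk]

theorem exists_eq_X_sq_sub_C_pow_of_card_toFinset_roots_eq_two {p : ℝ[X]} (hp : p.Monic)
    (hsplit : p.Splits) (hneg : ∀ r ∈ p.roots, -r ∈ p.roots) (hnext : p.nextCoeff = 0)
    (htwo : p.roots.toFinset.card = 2) :
    ∃ c, 0 < c ∧ ∃ m, p.natDegree = 2 * m ∧ p = (X ^ 2 - C c) ^ m := by
  classical
  obtain ⟨a, b, hab, hroots⟩ := Finset.card_eq_two.1 htwo
  have hmem (r : ℝ) : r ∈ p.roots ↔ r = a ∨ r = b := by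
    rw [← Multiset.mem_toFinset, hroots, Finset.mem_insert, Finset.mem_singleton]
  have hb : b = -a := by
    rcases (hmem _).1 (hneg a ((hmem a).2 (.inl rfl))) with h | h
    · rcases (hmem _).1 (hneg b ((hmem b).2 (.inr rfl))) with h' | h' <;>
        exact absurd (by linarith) hab
    · exact h.symm
  subst hb
  have ha : a ≠ 0 := fun h => hab (by rw [h, neg_zero])
  set i := p.roots.count a
  set j := p.roots.count (-a)
  have hsplit_roots : p.roots = i • {a} + j • {-a} := by
    rw [← Multiset.toFinset_sum_count_nsmul_eq p.roots, hroots, Finset.sum_pair hab]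
  have hij : i = j := by
    have hsum := hsplit.nextCoeff_eq_neg_sum_roots_of_monic hp
    rw [hnext, hsplit_roots] at hsum
    simp only [Multiset.sum_add, Multiset.sum_nsmul, Multiset.sum_singleton, nsmul_eq_mul] at hsum
    exact_mod_cast mul_right_cancel₀ ha (by linarith : (i : ℝ) * a = j * a)
  refine ⟨a ^ 2, by positivity, i, ?_, ?_⟩
  · rw [hsplit.natDegree_eq_card_roots, hsplit_roots]
    simp [← hij, two_mul]
  · rw [hsplit.eq_prod_roots_of_monic hp, hsplit_roots, ← hij]
    simp only [Multiset.map_add, Multiset.map_nsmul, Multiset.map_singleton, Multiset.prod_add,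
      Multiset.prod_nsmul, Multiset.prod_singleton, ← mul_pow, map_neg, sub_neg_eq_add, C_pow]
    ring

end Polynomial

namespace SimpleGraph

open Finset

variable {V : Type*} {G : SimpleGraph V}

lemma isMatchingFinset_empty : G.IsMatchingFinset ∅ := by
  simp [IsMatchingFinset]

lemma IsMatchingFinset.mono {s t : Finset (Sym2 V)} (ht : G.IsMatchingFinset t) (hst : s ⊆ t) :
    G.IsMatchingFinset s :=
  ⟨(coe_subset.2 hst).trans ht.1, ht.2.mono (coe_subset.2 hst)⟩

lemma IsMatchingFinset.not_isDiag {s : Finset (Sym2 V)} (hs : G.IsMatchingFinset s) {e : Sym2 V}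
    (he : e ∈ s) : ¬e.IsDiag :=
  G.not_isDiag_of_mem_edgeSet (hs.1 he)

lemma IsMatchingFinset.eq_of_mem_of_mem {s : Finset (Sym2 V)} (hs : G.IsMatchingFinset s)
    {e f : Sym2 V} (he : e ∈ s) (hf : f ∈ s) {v : V} (hve : v ∈ e) (hvf : v ∈ f) :
    e = f := by
  by_contra hef
  exact hs.2 he hf hef v hve hvf

lemma numMatchings_zero : G.numMatchings 0 = 1 := by
  rw [numMatchings, ← Set.ncard_singleton (∅ : Finset (Sym2 V))]
  congr 1
  ext s
  simp only [card_eq_zero, Set.mem_ofPred_eq, Set.mem_singleton_iff, and_iff_left_iff_imp]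
  rintro rfl
  exact isMatchingFinset_empty

section Matchings

variable [DecidableEq V]

def coveredVerts (s : Finset (Sym2 V)) : Finset V := s.biUnion Sym2.toFinset

@[simp]
lemma mem_coveredVerts {s : Finset (Sym2 V)} {v : V} :
    v ∈ coveredVerts s ↔ ∃ e ∈ s, v ∈ e := by
  simp [coveredVerts]

lemma coveredVerts_insert (e : Sym2 V) (s : Finset (Sym2 V)) :
    coveredVerts (insert e s) = e.toFinset ∪ coveredVerts s :=
  biUnion_insert

lemma IsMatchingFinset.insert {t : Finset (Sym2 V)} (ht : G.IsMatchingFinset t) {e : Sym2 V}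
    (he : e ∈ G.edgeSet) (hdisj : ∀ v ∈ e, v ∉ coveredVerts t) :
    G.IsMatchingFinset (insert e t) := by
  refine ⟨?_, ?_⟩
  · rw [coe_insert]
    exact Set.insert_subset he ht.1
  · rw [coe_insert, Set.pairwise_insert]
    refine ⟨ht.2, fun f hf _ => ⟨fun v hve hvf => ?_, fun v hvf hve => ?_⟩⟩ <;>
      exact hdisj v hve (mem_coveredVerts.2 ⟨f, hf, hvf⟩)

lemma IsMatchingFinset.card_coveredVerts {s : Finset (Sym2 V)} (hs : G.IsMatchingFinset s) :
    #(coveredVerts s) = 2 * #s := by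
  rw [coveredVerts, card_biUnion, sum_congr rfl fun e he =>
    Sym2.card_toFinset_of_not_isDiag e (hs.not_isDiag he), sum_const, smul_eq_mul, mul_comm]
  intro e he f hf hef
  rw [Function.onFun, Finset.disjoint_left]
  intro v hve hvf
  exact hs.2 he hf hef v (Sym2.mem_toFinset.1 hve) (Sym2.mem_toFinset.1 hvf)

lemma IsMatchingFinset.coveredVerts_erase {s : Finset (Sym2 V)} (hs : G.IsMatchingFinset s)
    {e : Sym2 V} (he : e ∈ s) : coveredVerts (s.erase e) = coveredVerts s \ e.toFinset := by
  ext v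
  simp only [mem_coveredVerts, mem_erase, mem_sdiff, Sym2.mem_toFinset]
  constructor
  · rintro ⟨f, ⟨hfe, hf⟩, hvf⟩
    exact ⟨⟨f, hf, hvf⟩, fun hve => hfe (hs.eq_of_mem_of_mem hf he hvf hve)⟩
  · rintro ⟨⟨f, hf, hvf⟩, hve⟩
    exact ⟨f, ⟨fun hfe => hve (hfe ▸ hvf), hf⟩, hvf⟩

end Matchings

lemma numMatchings_one : G.numMatchings 1 = Nat.card G.edgeSet := by
  classical
  have : {s : Finset (Sym2 V) | s.card = 1 ∧ G.IsMatchingFinset s} =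
      (fun e => ({e} : Finset (Sym2 V))) '' G.edgeSet := by
    ext s
    simp only [Set.mem_ofPred_eq, Set.mem_image, card_eq_one]
    constructor
    · rintro ⟨⟨e, rfl⟩, hs⟩
      exact ⟨e, hs.1 (by simp), rfl⟩
    · rintro ⟨e, he, rfl⟩
      refine ⟨⟨e, rfl⟩, ?_⟩
      simpa using isMatchingFinset_empty.insert (G := G) he (by simp [coveredVerts])
  rw [numMatchings, this, Set.ncard_image_of_injective _ singleton_injective, Nat.card_coe_set_eq]

section MatchingPolynomialIn

variable [Fintype V] [DecidableEq V]

variable (G) in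
open Classical in
noncomputable def matchingsIn (A : Finset V) : Finset (Finset (Sym2 V)) :=
  {s | G.IsMatchingFinset s ∧ coveredVerts s ⊆ A}

@[simp]
lemma mem_matchingsIn {A : Finset V} {s : Finset (Sym2 V)} :
    s ∈ G.matchingsIn A ↔ G.IsMatchingFinset s ∧ coveredVerts s ⊆ A := by
  simp [matchingsIn]

lemma filter_notMem_coveredVerts_matchingsIn (A : Finset V) (u : V) :
    {s ∈ G.matchingsIn A | u ∉ coveredVerts s} = G.matchingsIn (A.erase u) := by
  ext s
  simp only [mem_filter, mem_matchingsIn, subset_erase]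
  tauto

variable (G) in
/-- `μ(G[A], x)`, indexed by matchings rather than by their size: a matching `s` inside `A` leaves
`#(A \ coveredVerts s) = #A - 2 * #s` vertices uncovered, and no truncated subtraction occurs. -/
noncomputable def matchingPolynomialIn (A : Finset V) : ℝ[X] :=
  ∑ s ∈ G.matchingsIn A, (-1) ^ #s * X ^ #(A \ coveredVerts s)

lemma matchingPolynomialIn_empty : G.matchingPolynomialIn ∅ = 1 := by
  have : G.matchingsIn ∅ = {∅} := by
    ext s
    simp only [mem_matchingsIn, subset_empty, mem_singleton]
    constructor
    · rintro ⟨-, hcov⟩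
      exact eq_empty_of_forall_notMem fun e he =>
        notMem_empty _ (hcov ▸ mem_coveredVerts.2 ⟨e, he, Sym2.out_fst_mem e⟩)
    · rintro rfl
      exact ⟨isMatchingFinset_empty, by simp [coveredVerts]⟩
  simp [matchingPolynomialIn, this]

lemma eval_neg_matchingPolynomialIn (A : Finset V) (x : ℝ) :
    (G.matchingPolynomialIn A).eval (-x) = (-1) ^ #A * (G.matchingPolynomialIn A).eval x := by
  simp only [matchingPolynomialIn, eval_finsetSum, mul_sum, eval_mul, eval_pow, eval_neg, eval_one,
    eval_X]
  refine sum_congr rfl fun s hs => ?_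
  rw [← card_sdiff_add_card_eq_card (mem_matchingsIn.1 hs).2,
    (mem_matchingsIn.1 hs).1.card_coveredVerts, neg_pow x, pow_add, pow_mul]
  ring

section

variable [DecidableRel G.Adj]

lemma filter_mem_coveredVerts_matchingsIn {A : Finset V} {u : V} (hu : u ∈ A) :
    {s ∈ G.matchingsIn A | u ∈ coveredVerts s} = {v ∈ A.erase u | G.Adj u v}.biUnion
      fun v => (G.matchingsIn ((A.erase u).erase v)).image (insert s(u, v)) := by
  ext s
  simp only [mem_filter, mem_biUnion, mem_image, mem_matchingsIn]
  constructor
  · rintro ⟨⟨hs, hsA⟩, hu⟩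
    obtain ⟨e, he, hue⟩ := mem_coveredVerts.1 hu
    obtain ⟨v, rfl⟩ := Sym2.mem_iff_exists.1 hue
    have huv : G.Adj u v := hs.1 he
    have hvA : v ∈ A := hsA (mem_coveredVerts.2 ⟨_, he, Sym2.mem_mk_right u v⟩)
    refine ⟨v, ⟨mem_erase.2 ⟨huv.ne', hvA⟩, huv⟩, s.erase s(u, v),
      ⟨hs.mono (erase_subset _ _), ?_⟩, insert_erase he⟩
    intro w hw
    rw [hs.coveredVerts_erase he, mem_sdiff, Sym2.mem_toFinset, Sym2.mem_iff, not_or] at hw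
    exact mem_erase.2 ⟨hw.2.2, mem_erase.2 ⟨hw.2.1, hsA hw.1⟩⟩
  · rintro ⟨v, ⟨hvA, huv⟩, t, ⟨ht, htA⟩, rfl⟩
    have hdisj : ∀ w ∈ s(u, v), w ∉ coveredVerts t := by
      rintro w hw hwt
      have := htA hwt
      rcases Sym2.mem_iff.1 hw with rfl | rfl <;> simp at this
    refine ⟨⟨ht.insert huv hdisj, ?_⟩, mem_coveredVerts.2 ⟨_, mem_insert_self _ _,
      Sym2.mem_mk_left u v⟩⟩
    rw [coveredVerts_insert, Sym2.toFinset_mk_eq]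
    refine union_subset ?_ (htA.trans ((erase_subset _ _).trans (erase_subset _ _)))
    exact insert_subset hu (singleton_subset_iff.2 (mem_of_mem_erase hvA))

lemma sum_matchingsIn_eq {M : Type*} [AddCommMonoid M] {A : Finset V} {u : V} (hu : u ∈ A)
    (f : Finset (Sym2 V) → M) :
    ∑ s ∈ G.matchingsIn A, f s = ∑ s ∈ G.matchingsIn (A.erase u), f s +
      ∑ v ∈ {v ∈ A.erase u | G.Adj u v},
        ∑ t ∈ G.matchingsIn ((A.erase u).erase v), f (insert s(u, v) t) := by
  have hu_notMem {v : V} {t : Finset (Sym2 V)} (ht : t ∈ G.matchingsIn ((A.erase u).erase v)) :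
      s(u, v) ∉ t := fun h => by
    have := (mem_matchingsIn.1 ht).2 (mem_coveredVerts.2 ⟨_, h, Sym2.mem_mk_left u v⟩)
    simp at this
  rw [← sum_filter_not_add_sum_filter _ (fun s => u ∈ coveredVerts s),
    filter_notMem_coveredVerts_matchingsIn, filter_mem_coveredVerts_matchingsIn hu, sum_biUnion]
  · refine congrArg _ (sum_congr rfl fun v _ => sum_image fun t ht t' ht' htt' => ?_)
    rw [← erase_insert (hu_notMem ht), ← erase_insert (hu_notMem ht'), htt']
  · intro v hv v' hv' hvv'
    rw [Function.onFun, Finset.disjoint_left]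
    intro s hs hs'
    have hsM : s ∈ {s ∈ G.matchingsIn A | u ∈ coveredVerts s} := by
      rw [filter_mem_coveredVerts_matchingsIn hu]
      exact mem_biUnion.2 ⟨v, hv, hs⟩
    obtain ⟨t, -, rfl⟩ := mem_image.1 hs
    obtain ⟨t', -, ht't⟩ := mem_image.1 hs'
    have huv' : s(u, v') ∈ insert s(u, v) t := ht't ▸ mem_insert_self _ _
    exact hvv' (Sym2.congr_right.1 ((mem_matchingsIn.1 (mem_filter.1 hsM).1).1.eq_of_mem_of_mem
      (mem_insert_self _ _) huv' (Sym2.mem_mk_left u v) (Sym2.mem_mk_left u v')))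

lemma matchingPolynomialIn_eq_X_mul_sub {A : Finset V} {u : V} (hu : u ∈ A) :
    G.matchingPolynomialIn A = X * G.matchingPolynomialIn (A.erase u) -
      ∑ v ∈ {v ∈ A.erase u | G.Adj u v}, G.matchingPolynomialIn ((A.erase u).erase v) := by
  rw [matchingPolynomialIn, sum_matchingsIn_eq hu, sub_eq_add_neg, ← sum_neg_distrib,
    matchingPolynomialIn, mul_sum]
  congr 1
  · refine sum_congr rfl fun s hs => ?_
    have hu' : u ∈ A \ coveredVerts s := mem_sdiff.2 ⟨hu, fun h => by
      simpa using (mem_matchingsIn.1 hs).2 h⟩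
    rw [← card_erase_add_one hu', ← erase_sdiff_comm, pow_succ]
    ring
  · refine sum_congr rfl fun v hv => ?_
    rw [matchingPolynomialIn, ← sum_neg_distrib]
    refine sum_congr rfl fun t ht => ?_
    obtain ⟨ht, htA⟩ := mem_matchingsIn.1 ht
    have huv : s(u, v) ∉ t := fun h => by
      simpa using htA (mem_coveredVerts.2 ⟨_, h, Sym2.mem_mk_left u v⟩)
    have hcov : A \ coveredVerts (insert s(u, v) t) = (A.erase u).erase v \ coveredVerts t := by
      ext w
      simp only [coveredVerts_insert, Sym2.toFinset_mk_eq, mem_sdiff, mem_union, mem_insert,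
        mem_singleton, mem_erase]
      tauto
    rw [card_insert_of_notMem huv, hcov, pow_succ]
    ring

end

theorem heilmannLieb (A : Finset V) {z : ℂ} (hz : 0 < z.im) :
    aeval z (G.matchingPolynomialIn A) ≠ 0 ∧ ∀ u ∈ A, 0 <
      (aeval z (G.matchingPolynomialIn A) / aeval z (G.matchingPolynomialIn (A.erase u))).im := by
  classical
  induction A using Finset.strongInduction with
  | H A ih =>
  have hratio (u : V) (hu : u ∈ A) : 0 <
      (aeval z (G.matchingPolynomialIn A) / aeval z (G.matchingPolynomialIn (A.erase u))).im := by
    obtain ⟨hne, hpos⟩ := ih (A.erase u) (erase_ssubset hu)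
    have hneg (v : V) (hv : v ∈ A.erase u) :
        (aeval z (G.matchingPolynomialIn ((A.erase u).erase v)) /
          aeval z (G.matchingPolynomialIn (A.erase u))).im < 0 := by
      have hv := hpos v hv
      rw [← inv_div, Complex.inv_im]
      exact div_neg_of_neg_of_pos (neg_neg_of_pos hv)
        (Complex.normSq_pos.2 fun h => by simp [h] at hv)
    -- `μ_A / μ_{A-u} = z - ∑ v, (μ_{A-u} / μ_{A-u-v})⁻¹`, and inversion maps the upper half-plane
    -- into the lower one.
    rw [matchingPolynomialIn_eq_X_mul_sub hu, map_sub, map_mul, aeval_X, map_sum, sub_div,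
      mul_div_assoc, div_self hne, mul_one, sum_div, Complex.sub_im, Complex.im_sum]
    linarith [sum_nonpos fun v (hv : v ∈ {v ∈ A.erase u | G.Adj u v}) =>
      (hneg v (mem_filter.1 hv).1).le]
  refine ⟨?_, hratio⟩
  rcases A.eq_empty_or_nonempty with rfl | ⟨u, hu⟩
  · simp [matchingPolynomialIn_empty]
  · intro h
    simpa [h] using hratio u hu

theorem aeval_matchingPolynomialIn_ne_zero (A : Finset V) {z : ℂ} (hz : z.im ≠ 0) :
    aeval z (G.matchingPolynomialIn A) ≠ 0 := by
  rcases hz.lt_or_gt with hz | hz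
  · have := (heilmannLieb (G := G) A (z := (starRingEnd ℂ) z) (by simpa using hz)).1
    rwa [← Complex.conjAe_coe, aeval_algHom_apply, Ne,
      map_eq_zero_iff _ Complex.conjAe.injective] at this
  · exact (heilmannLieb A hz).1

lemma numMatchings_eq_card_filter (k : ℕ) :
    G.numMatchings k = #{s ∈ G.matchingsIn univ | #s = k} := by
  rw [numMatchings, ← Set.ncard_coe_finset]
  congr 1
  ext s
  simp [and_comm]

lemma matchingPolynomial_eq_matchingPolynomialIn_univ :
    G.matchingPolynomial = G.matchingPolynomialIn univ := by
  have hcard (s : Finset (Sym2 V)) (hs : s ∈ G.matchingsIn univ) :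
      #(univ \ coveredVerts s) = Fintype.card V - 2 * #s := by
    rw [← compl_eq_univ_sdiff, card_compl, (mem_matchingsIn.1 hs).1.card_coveredVerts]
  have hmaps (s : Finset (Sym2 V)) (hs : s ∈ G.matchingsIn univ) :
      #s ∈ range (Fintype.card V + 1) := by
    have := card_le_univ (coveredVerts s)
    rw [(mem_matchingsIn.1 hs).1.card_coveredVerts] at this
    rw [mem_range]
    omega
  rw [matchingPolynomialIn, sum_congr rfl fun s hs => by rw [hcard s hs],
    ← sum_fiberwise_of_maps_to' hmaps (fun k => (-1 : ℝ[X]) ^ k * X ^ (Fintype.card V - 2 * k)),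
    matchingPolynomial]
  refine sum_congr rfl fun k _ => ?_
  rw [sum_const, ← numMatchings_eq_card_filter, nsmul_eq_mul]
  simp only [C_mul, C_pow, C_neg, C_1, map_natCast]
  ring

end MatchingPolynomialIn

section

variable [Fintype V]

lemma numMatchings_eq_zero {k : ℕ} (hk : Fintype.card V < 2 * k) : G.numMatchings k = 0 := by
  classical
  rw [numMatchings_eq_card_filter, card_eq_zero, filter_eq_empty_iff]
  intro s hs hsk
  have := card_le_univ (coveredVerts s)
  rw [(mem_matchingsIn.1 hs).1.card_coveredVerts] at this
  omega

lemma coeff_matchingPolynomial (d : ℕ) :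
    G.matchingPolynomial.coeff d = ∑ k ∈ range (Fintype.card V + 1),
      if d = Fintype.card V - 2 * k then (-1) ^ k * (G.numMatchings k : ℝ) else 0 := by
  simp only [matchingPolynomial, finsetSum_coeff, coeff_C_mul_X_pow]

lemma coeff_matchingPolynomial_sub_two_mul {k : ℕ} (hk : 2 * k ≤ Fintype.card V) :
    G.matchingPolynomial.coeff (Fintype.card V - 2 * k) = (-1) ^ k * G.numMatchings k := by
  rw [coeff_matchingPolynomial, sum_eq_single k]
  · rw [if_pos rfl]
  · intro j _ hjk
    by_cases hj : 2 * j ≤ Fintype.card V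
    · rw [if_neg (by omega)]
    · simp [numMatchings_eq_zero (not_le.1 hj)]
  · intro hk'
    simp only [mem_range] at hk'
    omega

lemma coeff_matchingPolynomial_eq_zero {d : ℕ}
    (hd : ∀ k, 2 * k ≤ Fintype.card V → d ≠ Fintype.card V - 2 * k) :
    G.matchingPolynomial.coeff d = 0 := by
  rw [coeff_matchingPolynomial]
  refine sum_eq_zero fun k _ => ?_
  by_cases hk : 2 * k ≤ Fintype.card V
  · rw [if_neg (hd k hk)]
  · simp [numMatchings_eq_zero (not_le.1 hk)]

lemma natDegree_matchingPolynomial_le : G.matchingPolynomial.natDegree ≤ Fintype.card V :=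
  natDegree_le_iff_coeff_eq_zero.2 fun d hd =>
    coeff_matchingPolynomial_eq_zero fun k _ => by
      have : Fintype.card V < d := by exact_mod_cast hd
      omega

lemma coeff_matchingPolynomial_card : G.matchingPolynomial.coeff (Fintype.card V) = 1 := by
  simpa [numMatchings_zero] using coeff_matchingPolynomial_sub_two_mul (G := G) (k := 0) (by omega)

lemma monic_matchingPolynomial : G.matchingPolynomial.Monic :=
  monic_of_natDegree_le_of_coeff_eq_one _ natDegree_matchingPolynomial_le
    coeff_matchingPolynomial_card

lemma natDegree_matchingPolynomial : G.matchingPolynomial.natDegree = Fintype.card V :=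
  natDegree_eq_of_le_of_coeff_ne_zero natDegree_matchingPolynomial_le
    (by simp [coeff_matchingPolynomial_card])

lemma nextCoeff_matchingPolynomial : G.matchingPolynomial.nextCoeff = 0 := by
  rw [nextCoeff, natDegree_matchingPolynomial]
  split_ifs
  · rfl
  · exact coeff_matchingPolynomial_eq_zero fun k _ => by omega

lemma eval_neg_matchingPolynomial (x : ℝ) :
    G.matchingPolynomial.eval (-x) = (-1) ^ Fintype.card V * G.matchingPolynomial.eval x := by
  classical
  rw [matchingPolynomial_eq_matchingPolynomialIn_univ, eval_neg_matchingPolynomialIn, card_univ]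

lemma neg_mem_roots_matchingPolynomial {r : ℝ} (hr : r ∈ G.matchingPolynomial.roots) :
    -r ∈ G.matchingPolynomial.roots := by
  rw [mem_roots monic_matchingPolynomial.ne_zero, IsRoot, eval_neg_matchingPolynomial,
    (mem_roots'.1 hr).2, mul_zero]

theorem matchingPolynomial_splits : G.matchingPolynomial.Splits := by
  classical
  refine Splits.of_splits_map_of_injective (algebraMap ℝ ℂ).injective (IsAlgClosed.splits _)
    fun z hz => ⟨z.re, Complex.ext (by simp) ?_⟩
  by_contra him
  refine aeval_matchingPolynomialIn_ne_zero (G := G) univ (Ne.symm (by simpa using him)) ?_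
  rw [← matchingPolynomial_eq_matchingPolynomialIn_univ, aeval_def, eval₂_eq_eval_map]
  exact (mem_roots'.1 hz).2

lemma numMatchings_eq_of_matchingPolynomial_eq {c : ℝ} {m : ℕ} (hn : Fintype.card V = 2 * m)
    (hμ : G.matchingPolynomial = (X ^ 2 - C c) ^ m) {k : ℕ} (hk : k ≤ m) :
    (G.numMatchings k : ℝ) = m.choose k * c ^ k := by
  have h := coeff_matchingPolynomial_sub_two_mul (G := G) (k := k) (by omega)
  rw [hμ, hn, ← Nat.mul_sub, coeff_X_sq_sub_C_pow c hk, neg_pow] at h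
  rw [← mul_right_inj' (pow_ne_zero k (neg_ne_zero.2 one_ne_zero) : (-1 : ℝ) ^ k ≠ 0), ← h]
  ring

lemma mul_numMatchings_le_of_card_eq {m : ℕ} (hn : Fintype.card V = 2 * m) :
    m * G.numMatchings m ≤ G.numMatchings (m - 1) := by
  classical
  set P := {s ∈ G.matchingsIn univ | #s = m}
  have hP {s : Finset (Sym2 V)} : s ∈ P ↔ G.IsMatchingFinset s ∧ #s = m := by simp [P]
  have hperfect {s : Finset (Sym2 V)} (hs : s ∈ P) {e : Sym2 V} (he : e ∈ s) :
      e.toFinset = (coveredVerts (s.erase e))ᶜ := by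
    obtain ⟨hs, hsm⟩ := hP.1 hs
    have hcov : coveredVerts s = univ := eq_univ_of_card _ (by rw [hs.card_coveredVerts, hsm, hn])
    rw [hs.coveredVerts_erase he, hcov, ← compl_eq_univ_sdiff, compl_compl]
  rw [numMatchings_eq_card_filter, numMatchings_eq_card_filter,
    show m * #P = #(P.sigma fun s => s) by
      rw [card_sigma, sum_const_nat fun s (hs : s ∈ P) => (hP.1 hs).2, mul_comm]]
  refine card_le_card_of_injOn (fun x => x.1.erase x.2) (fun ⟨s, e⟩ hse => ?_) ?_
  · simp only [mem_coe, mem_sigma] at hse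
    obtain ⟨hs, hsm⟩ := hP.1 hse.1
    simp only [mem_coe, mem_filter, mem_matchingsIn, subset_univ, and_true]
    exact ⟨hs.mono (erase_subset _ _), by rw [card_erase_of_mem hse.2, hsm]⟩
  · rintro ⟨s, e⟩ hse ⟨s', e'⟩ hse' heq
    simp only [mem_coe, mem_sigma] at hse hse' heq
    obtain ⟨hs, he⟩ := hse
    obtain ⟨hs', he'⟩ := hse'
    obtain rfl : e = e' := Sym2.ext fun v => by
      rw [← Sym2.mem_toFinset, ← Sym2.mem_toFinset, hperfect hs he, hperfect hs' he', heq]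
    obtain rfl : s = s' := by rw [← insert_erase he, ← insert_erase he', heq]
    rfl

lemma Connected.nonempty_iso_top_of_card_eq_two (hG : G.Connected) (h2 : Fintype.card V = 2) :
    Nonempty (G ≃g (⊤ : SimpleGraph (Fin 2))) := by
  classical
  obtain rfl : G = ⊤ := by
    ext x y
    refine ⟨Adj.ne, fun hxy => ?_⟩
    obtain ⟨p⟩ := hG.preconnected x y
    have hp := Walk.not_nil_of_ne (p := p) hxy
    have hxz := (p.adj_snd hp).ne
    have hsnd : p.snd = y := by
      by_contra hzy
      have := card_le_univ {x, y, p.snd}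
      rw [card_eq_three.2 ⟨x, y, p.snd, hxy, hxz, Ne.symm hzy, rfl⟩, h2] at this
      omega
    exact hsnd ▸ p.adj_snd hp
  exact ⟨Iso.completeGraph (Fintype.equivFinOfCardEq h2)⟩

lemma le_one_of_matchingPolynomial_eq (hG : G.Connected) {c : ℝ} (hc : 0 < c) {m : ℕ}
    (hn : Fintype.card V = 2 * m) (hμ : G.matchingPolynomial = (X ^ 2 - C c) ^ m) : m ≤ 1 := by
  rcases Nat.eq_zero_or_pos m with rfl | hm
  · exact zero_le_one
  have hperfect := numMatchings_eq_of_matchingPolynomial_eq hn hμ le_rfl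
  have hnear := numMatchings_eq_of_matchingPolynomial_eq hn hμ (Nat.sub_le m 1)
  have hedges := numMatchings_eq_of_matchingPolynomial_eq hn hμ hm
  rw [Nat.choose_self, Nat.cast_one, one_mul] at hperfect
  rw [← Nat.choose_symm (Nat.sub_le m 1), Nat.sub_sub_self hm, Nat.choose_one_right] at hnear
  rw [Nat.choose_one_right, pow_one] at hedges
  have hc1 : c ≤ 1 := by
    have := (Nat.cast_le (α := ℝ)).2 (mul_numMatchings_le_of_card_eq (G := G) hn)
    push_cast at this
    rw [hperfect, hnear, ← pow_sub_one_mul hm.ne', ← mul_assoc] at this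
    exact le_of_mul_le_mul_left (by rwa [mul_one]) (by positivity)
  have := hG.card_vert_le_card_edgeSet_add_one
  rw [← numMatchings_one, Nat.card_eq_fintype_card, hn] at this
  have hcard : (2 * m : ℝ) ≤ G.numMatchings 1 + 1 := by exact_mod_cast this
  rw [hedges] at hcard
  have : (m : ℝ) ≤ 1 := by nlinarith
  exact_mod_cast this

end

end SimpleGraph

/-- A connected graph whose matching polynomial has exactly two distinct (real) roots is `K₂`. -/
theorem isoK2_of_two_distinct_matching_roots {V : Type*} [Fintype V]
    (G : SimpleGraph V) (hG : G.Connected)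
    (h : G.matchingPolynomial.roots.toFinset.card = 2) :
    Nonempty (G ≃g (⊤ : SimpleGraph (Fin 2))) := by
  obtain ⟨c, hc, m, hdeg, hμ⟩ := exists_eq_X_sq_sub_C_pow_of_card_toFinset_roots_eq_two
    G.monic_matchingPolynomial G.matchingPolynomial_splits
    (fun _ => G.neg_mem_roots_matchingPolynomial) G.nextCoeff_matchingPolynomial h
  rw [SimpleGraph.natDegree_matchingPolynomial] at hdeg
  have hm := SimpleGraph.le_one_of_matchingPolynomial_eq hG hc hdeg hμ
  have hpos : 0 < Fintype.card V := Fintype.card_pos_iff.2 hG.nonempty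
  exact hG.nonempty_iso_top_of_card_eq_two (by omega)
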